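/- Let T, L, P > 0, n ∈ ℕ with n ≥ 1, and let (h,t,ρ) be a discretization with t = Σ₊h (i.e. t_k = Σ_{j=1}^k h_j for all k ∈ [0,n]) and ρ_j = 2LP h_j² for all j ∈ [1,n]. Then for every k ∈ [0,n], ΔE(h,t,ρ;k) := E(ψ[h,t,ρ;k]) − E(h,t,ρ) ≤ −(1/2) 𝓔_k(h,t,ρ). -/

import Mathlib

noncomputable section

/-- The local error term `𝓔_j(h,t,ρ)` of the Euler scheme error bound:
`𝓔_0 = e^{LT} ρ_0/2` and `𝓔_j = e^{L(T-t_j)}(e^{L h_j}-1)(P h_j + ρ_j/2 + ρ_j/(2 L h_j))`. -/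
def calE (T L P : ℝ) (h t ρ : ℕ → ℝ) (j : ℕ) : ℝ :=
  if j = 0 then Real.exp (L * T) * ρ 0 / 2
  else Real.exp (L * (T - t j)) * (Real.exp (L * h j) - 1) *
    (P * h j + ρ j / 2 + ρ j / (2 * L * h j))

/-- The error bound `E(h,t,ρ) = ∑_{j=0}^n 𝓔_j(h,t,ρ)` for a discretization of length `n`. -/
def Ebound (T L P : ℝ) (n : ℕ) (h t ρ : ℕ → ℝ) : ℝ :=
  ∑ j ∈ Finset.range (n + 1), calE T L P h t ρ j

/-- The `h`-component of the subdivision rule `ψ[h,t,ρ;k]`: for `k = 0` the step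
sizes are unchanged, for `k ∈ [1,n]` the entry `h_k` is replaced by the two
entries `h_k/2, h_k/2` and later entries are shifted. -/
def psiH (h : ℕ → ℝ) (k : ℕ) : ℕ → ℝ := fun j =>
  if k = 0 then h j
  else if j < k then h j
  else if j ≤ k + 1 then h k / 2
  else h (j - 1)

/-- The `t`-component of the subdivision rule `ψ[h,t,ρ;k]`: for `k = 0` the nodes
are unchanged, for `k ∈ [1,n]` the node `t_k - h_k/2` is inserted between
`t_{k-1}` and `t_k`. -/
def psiT (h t : ℕ → ℝ) (k : ℕ) : ℕ → ℝ := fun j =>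
  if k = 0 then t j
  else if j < k then t j
  else if j = k then t k - h k / 2
  else t (j - 1)

/-- The `ρ`-component of the subdivision rule `ψ[h,t,ρ;k]`: for `k = 0` the entry
`ρ_0` is replaced by `ρ_0/4`, for `k ∈ [1,n]` the entry `ρ_k` is replaced by the
two entries `ρ_k/4, ρ_k/4` and later entries are shifted. -/
def psiRho (ρ : ℕ → ℝ) (k : ℕ) : ℕ → ℝ := fun j =>
  if k = 0 then (if j = 0 then ρ 0 / 4 else ρ j)
  else if j < k then ρ j
  else if j ≤ k + 1 then ρ k / 4
  else ρ (j - 1)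

/-- The length of the discretization produced by `ψ[h,t,ρ;k]` from one of length `n`:
`n` if `k = 0`, and `n + 1` otherwise. -/
def newn (n k : ℕ) : ℕ := if k = 0 then n else n + 1

/-- `ΔE(h,t,ρ;k) = E(ψ[h,t,ρ;k]) - E(h,t,ρ)`. -/
def deltaE (T L P : ℝ) (n : ℕ) (h t ρ : ℕ → ℝ) (k : ℕ) : ℝ :=
  Ebound T L P (newn n k) (psiH h k) (psiT h t k) (psiRho ρ k) - Ebound T L P n h t ρ

/-- The cost estimator `C(h,t,ρ) = ∑_{j=0}^{n-1} (v_R(t_j)/ρ_j^{d_R}) ·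
(v_F(t_j) h_{j+1}^{d_F} / ρ_{j+1}^{d_F})`. -/
def costC (dR dF : ℕ) (vR vF : ℝ → ℝ) (n : ℕ) (h t ρ : ℕ → ℝ) : ℝ :=
  ∑ j ∈ Finset.range n,
    (vR (t j) / ρ j ^ dR) * (vF (t j) * h (j + 1) ^ dF / ρ (j + 1) ^ dF)

/-- `ΔC(h,t,ρ;k) = C(ψ[h,t,ρ;k]) - C(h,t,ρ)`. -/
def deltaC (dR dF : ℕ) (vR vF : ℝ → ℝ) (n : ℕ) (h t ρ : ℕ → ℝ) (k : ℕ) : ℝ :=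
  costC dR dF vR vF (newn n k) (psiH h k) (psiT h t k) (psiRho ρ k) -
    costC dR dF vR vF n h t ρ

lemma sum_split_aux (f f' : ℕ → ℝ) (n k : ℕ) (hk1 : 1 ≤ k) (hkn : k ≤ n)
    (hlt : ∀ j, j < k → f' j = f j) (hge : ∀ j, k + 2 ≤ j → f' j = f (j - 1)) :
    ∑ j ∈ Finset.range (n + 2), f' j
      = ∑ j ∈ Finset.range (n + 1), f j + (f' k + f' (k + 1) - f k) := by
  have e1 : ∑ j ∈ Finset.range (n + 2), f' j
      = ∑ j ∈ Finset.Ico 0 k, f' j + ∑ j ∈ Finset.Ico k (n + 2), f' j := by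
    rw [Finset.range_eq_Ico, ← Finset.sum_Ico_consecutive _ (Nat.zero_le k) (by omega)]
  have e2 : ∑ j ∈ Finset.Ico k (n + 2), f' j
      = f' k + (f' (k + 1) + ∑ j ∈ Finset.Ico (k + 2) (n + 2), f' j) := by
    rw [Finset.sum_eq_sum_Ico_succ_bot (by omega), Finset.sum_eq_sum_Ico_succ_bot (by omega)]
  have e3 : ∑ j ∈ Finset.Ico (k + 2) (n + 2), f' j
      = ∑ j ∈ Finset.Ico (k + 1) (n + 1), f j := by
    rw [Finset.sum_Ico_eq_sum_range, Finset.sum_Ico_eq_sum_range]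
    have : n + 2 - (k + 2) = n + 1 - (k + 1) := by omega
    rw [this]
    refine Finset.sum_congr rfl fun i _ => ?_
    rw [hge (k + 2 + i) (by omega)]
    congr 1
    omega
  have e4 : ∑ j ∈ Finset.Ico 0 k, f' j = ∑ j ∈ Finset.Ico 0 k, f j :=
    Finset.sum_congr rfl fun j hj => hlt j (Finset.mem_Ico.mp hj).2
  have e5 : ∑ j ∈ Finset.range (n + 1), f j
      = ∑ j ∈ Finset.Ico 0 k, f j + (f k + ∑ j ∈ Finset.Ico (k + 1) (n + 1), f j) := by
    rw [Finset.range_eq_Ico, ← Finset.sum_Ico_consecutive _ (Nat.zero_le k) (by omega),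
      Finset.sum_eq_sum_Ico_succ_bot (show k < n + 1 by omega)]
  rw [e1, e2, e3, e4, e5]; ring

lemma key_ineq (L P T τ a : ℝ) (hL : 0 < L) (hP : 0 < P) (ha : 0 < a) :
    Real.exp (L * (T - (τ - a / 2))) * (Real.exp (L * (a / 2)) - 1) *
        (P * (a / 2) + 2 * L * P * a ^ 2 / 4 / 2 + 2 * L * P * a ^ 2 / 4 / (2 * L * (a / 2)))
      + Real.exp (L * (T - τ)) * (Real.exp (L * (a / 2)) - 1) *
        (P * (a / 2) + 2 * L * P * a ^ 2 / 4 / 2 + 2 * L * P * a ^ 2 / 4 / (2 * L * (a / 2)))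
      - Real.exp (L * (T - τ)) * (Real.exp (L * a) - 1) *
        (P * a + 2 * L * P * a ^ 2 / 2 + 2 * L * P * a ^ 2 / (2 * L * a))
      ≤ -(1 / 2) * (Real.exp (L * (T - τ)) * (Real.exp (L * a) - 1) *
        (P * a + 2 * L * P * a ^ 2 / 2 + 2 * L * P * a ^ 2 / (2 * L * a))) := by
  have hs2 : Real.exp (L * a) = Real.exp (L * (a / 2)) * Real.exp (L * (a / 2)) := by
    rw [← Real.exp_add]; ring_nf
  have hE1 : Real.exp (L * (T - (τ - a / 2)))
      = Real.exp (L * (T - τ)) * Real.exp (L * (a / 2)) := by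
    rw [← Real.exp_add]; ring_nf
  have d1 : 2 * L * P * a ^ 2 / 4 / (2 * L * (a / 2)) = P * a / 2 := by
    field_simp; ring
  have d2 : 2 * L * P * a ^ 2 / (2 * L * a) = P * a := by
    field_simp
  rw [hs2, hE1, d1, d2]
  set E := Real.exp (L * (T - τ)) with hEdef
  set s := Real.exp (L * (a / 2)) with hsdef
  have hE : 0 < E := Real.exp_pos _
  have hs : 1 < s := by
    rw [hsdef, show (1 : ℝ) = Real.exp 0 from (Real.exp_zero).symm]
    exact Real.exp_lt_exp.mpr (by positivity)
  nlinarith [mul_nonneg (mul_nonneg hE.le (by nlinarith : (0 : ℝ) ≤ s * s - 1))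
      (mul_nonneg (mul_nonneg hL.le hP.le) (sq_nonneg a))]

theorem stmt_5 (T L P : ℝ) (hT : 0 < T) (hL : 0 < L) (hP : 0 < P)
    (n : ℕ) (hn : 1 ≤ n) (h t ρ : ℕ → ℝ)
    (hh : ∀ j, 1 ≤ j → j ≤ n → 0 < h j)
    (htnn : ∀ j, j ≤ n → 0 ≤ t j)
    (hρ : ∀ j, j ≤ n → 0 < ρ j)
    (hcum : ∀ k, k ≤ n → t k = ∑ j ∈ Finset.Icc 1 k, h j)
    (hcoup : ∀ j, 1 ≤ j → j ≤ n → ρ j = 2 * L * P * (h j) ^ 2) :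
    ∀ k, k ≤ n → deltaE T L P n h t ρ k ≤ -(1 / 2) * calE T L P h t ρ k := by
  intro k hkn
  by_cases hk0 : k = 0
  · subst hk0
    have hpsiH : psiH h 0 = h := by funext j; simp [psiH]
    have hpsiT : psiT h t 0 = t := by funext j; simp [psiT]
    have hnew : newn n 0 = n := by simp [newn]
    rw [deltaE, hnew, hpsiH, hpsiT, Ebound, Ebound,
      Finset.sum_range_succ' (calE T L P h t (psiRho ρ 0)),
      Finset.sum_range_succ' (calE T L P h t ρ)]
    have hcong : ∀ i ∈ Finset.range n, calE T L P h t (psiRho ρ 0) (i + 1)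
        = calE T L P h t ρ (i + 1) := by
      intro i _
      simp [calE, psiRho]
    rw [Finset.sum_congr rfl hcong]
    have h0 : calE T L P h t (psiRho ρ 0) 0 = Real.exp (L * T) * (ρ 0 / 4) / 2 := by
      simp [calE, psiRho]
    have h0' : calE T L P h t ρ 0 = Real.exp (L * T) * ρ 0 / 2 := by simp [calE]
    rw [h0, h0']
    nlinarith [mul_nonneg (Real.exp_pos (L * T)).le (hρ 0 (Nat.zero_le n)).le]
  · have hk1 : 1 ≤ k := Nat.one_le_iff_ne_zero.mpr hk0
    have ha : 0 < h k := hh k hk1 hkn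
    have hnew : newn n k = n + 1 := by simp [newn, hk0]
    have hlt : ∀ j, j < k →
        calE T L P (psiH h k) (psiT h t k) (psiRho ρ k) j = calE T L P h t ρ j := by
      intro j hj
      have hk : 0 < k := hk1
      simp [calE, psiH, psiT, psiRho, hk0, hj, hk]
    have hge : ∀ j, k + 2 ≤ j →
        calE T L P (psiH h k) (psiT h t k) (psiRho ρ k) j = calE T L P h t ρ (j - 1) := by
      intro j hj
      have hj0 : j ≠ 0 := by omega
      have hj10 : j - 1 ≠ 0 := by omega
      have h1 : ¬ j < k := by omega
      have h2 : ¬ j ≤ k + 1 := by omega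
      have h3 : j ≠ k := by omega
      simp only [calE, psiH, psiT, psiRho, if_neg hk0, if_neg hj0, if_neg hj10,
        if_neg h1, if_neg h2, if_neg h3]
    rw [deltaE, hnew, Ebound, Ebound, show n + 1 + 1 = n + 2 from rfl,
      sum_split_aux (calE T L P h t ρ) _ n k hk1 hkn hlt hge, add_sub_cancel_left]
    have hkk : ¬ k < k := lt_irrefl k
    have hkk1 : k ≤ k + 1 := by omega
    have hk10 : k + 1 ≠ 0 := by omega
    have hk1k : ¬ k + 1 < k := by omega
    have hk1k' : k + 1 ≠ k := by omega
    have ek : calE T L P (psiH h k) (psiT h t k) (psiRho ρ k) k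
        = Real.exp (L * (T - (t k - h k / 2))) * (Real.exp (L * (h k / 2)) - 1) *
          (P * (h k / 2) + ρ k / 4 / 2 + ρ k / 4 / (2 * L * (h k / 2))) := by
      simp only [calE, psiH, psiT, psiRho, if_neg hk0, if_neg hkk, if_pos hkk1,
        if_pos rfl, if_true]
    have ek1 : calE T L P (psiH h k) (psiT h t k) (psiRho ρ k) (k + 1)
        = Real.exp (L * (T - t k)) * (Real.exp (L * (h k / 2)) - 1) *
          (P * (h k / 2) + ρ k / 4 / 2 + ρ k / 4 / (2 * L * (h k / 2))) := by
      simp only [calE, psiH, psiT, psiRho, if_neg hk0, if_neg hk10, if_neg hk1k,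
        if_pos (le_refl (k + 1)), if_neg hk1k', Nat.add_sub_cancel]
    have ekk : calE T L P h t ρ k
        = Real.exp (L * (T - t k)) * (Real.exp (L * h k) - 1) *
          (P * h k + ρ k / 2 + ρ k / (2 * L * h k)) := by
      simp only [calE, if_neg hk0]
    rw [ek, ek1, ekk, hcoup k hk1 hkn]
    have key := key_ineq L P T (t k) (h k) hL hP ha
    convert key using 3 <;> ring
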